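/- arXiv:2504.15453 — 4 statements merged into one kernel-verified Lean document; each statement's English description precedes it below -/
import Mathlib

section
/- Let y : [0,∞) → ℝ be continuous with y(0) > 0, and let M > 0. Suppose that for every t ≥ 0, if y(s) > 0 for all s ∈ [0,t] then 1/y(t) ≤ M. Then y(t) ≥ 1/M > 0 for all t ≥ 0. (Boundedness of the inverse barrier along a trajectory forces the safety function to stay strictly positive for all time, i.e., the safety condition h(x(t)) > 0 ∀ t ≥ 0 holds.) -/
/-- Boundedness of the inverse barrier along a trajectory forces the safety
function to stay strictly positive: if `y` is continuous on `[0,∞)` with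
`y(0) > 0` and `1/y(t) ≤ M` whenever `y` has remained positive on `[0,t]`,
then `y(t) ≥ 1/M > 0` for all `t ≥ 0`. -/
theorem inverse_barrier_bound_forces_safety
    (y : ℝ → ℝ) (hy : ContinuousOn y (Set.Ici 0)) (hy0 : 0 < y 0)
    (M : ℝ) (hM : 0 < M)
    (hbound : ∀ t : ℝ, 0 ≤ t → (∀ s ∈ Set.Icc (0:ℝ) t, 0 < y s) → 1 / y t ≤ M) :
    (0:ℝ) < 1 / M ∧ ∀ t : ℝ, 0 ≤ t → 1 / M ≤ y t := by
  have h1M : 0 < 1 / M := by positivity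
  refine ⟨h1M, ?_⟩
  intro t₀ ht₀
  by_contra hcon
  push_neg at hcon
  -- y 0 ≥ 1/M
  have h0b : 1 / y 0 ≤ M := by
    refine hbound 0 le_rfl ?_
    intro s hs
    have : s = 0 := le_antisymm hs.2 hs.1
    simpa [this] using hy0
  have hy0M : 1 / M ≤ y 0 := (one_div_le hy0 hM).mp h0b
  set c : ℝ := (max (y t₀) 0 + 1 / M) / 2 with hc
  have hmax : max (y t₀) 0 < 1 / M := max_lt hcon h1M
  have hc0 : 0 < c := by
    have := le_max_right (y t₀) 0
    simp only [hc]; linarith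
  have hcM : c < 1 / M := by simp only [hc]; linarith
  have hyt₀c : y t₀ < c := by
    have := le_max_left (y t₀) 0
    simp only [hc]; linarith
  set B : Set ℝ := Set.Icc 0 t₀ ∩ y ⁻¹' Set.Iic c with hB
  have hBne : B.Nonempty := ⟨t₀, ⟨ht₀, le_rfl⟩, hyt₀c.le⟩
  have hBclosed : IsClosed B := by
    have : ContinuousOn y (Set.Icc 0 t₀) :=
      hy.mono (fun x hx => hx.1)
    exact this.preimage_isClosed_of_isClosed isClosed_Icc isClosed_Iic
  have hBbdd : BddBelow B := ⟨0, fun x hx => hx.1.1⟩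
  set τ := sInf B with hτ
  have hτB : τ ∈ B := hBclosed.csInf_mem hBne hBbdd
  have hτ0 : 0 ≤ τ := hτB.1.1
  have hyτc : y τ ≤ c := hτB.2
  have hτpos : 0 < τ := by
    rcases hτ0.lt_or_eq with h | h
    · exact h
    · exfalso
      rw [← h] at hyτc
      linarith
  have hlt : ∀ s, 0 ≤ s → s < τ → c < y s := by
    intro s hs hsτ
    by_contra hle
    push_neg at hle
    have hsB : s ∈ B := ⟨⟨hs, hsτ.le.trans hτB.1.2⟩, hle⟩
    exact absurd (csInf_le hBbdd hsB) (not_le.mpr hsτ)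
  have hcyτ : c ≤ y τ := by
    have hcw : ContinuousWithinAt y (Set.Ico 0 τ) τ :=
      (hy τ hτ0).mono Set.Ico_subset_Ici_self
    have hne : (nhdsWithin τ (Set.Ico 0 τ)).NeBot := by
      rw [← mem_closure_iff_nhdsWithin_neBot, closure_Ico hτpos.ne]
      exact ⟨hτ0, le_rfl⟩
    exact ge_of_tendsto hcw (eventually_nhdsWithin_of_forall
      fun s hs => (hlt s hs.1 hs.2).le)
  have hyτ : y τ = c := le_antisymm hyτc hcyτ
  have hpos : ∀ s ∈ Set.Icc (0:ℝ) τ, 0 < y s := by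
    intro s hs
    rcases lt_or_eq_of_le hs.2 with h | h
    · exact hc0.trans (hlt s hs.1 h)
    · rw [h, hyτ]; exact hc0
  have hb := hbound τ hτ0 hpos
  have : 1 / M ≤ y τ := (one_div_le (hpos τ ⟨hτ0, le_rfl⟩) hM).mp hb
  rw [hyτ] at this
  linarith
end

section
/- Let h : ℝⁿ → ℝ be C¹, γ ≥ 0, β⁰ ∈ ℝ, M ∈ ℝ with M + β⁰ > 0. Let x : [0,∞) → ℝⁿ be C¹ with continuous velocity v(t) = x′(t), suppose h(x(t)) > 0 for all t ≥ 0, and let z : [0,∞) → ℝ be differentiable satisfying the barrier-state ODE z′(t) = −(z(t)+β⁰)² ⟨∇h(x(t)), v(t)⟩ − γ (z(t) + β⁰ − 1/h(x(t))) with consistent initialization z(0) = 1/h(x(0)) − β⁰. If z(t) ≤ M for all t ≥ 0, then 1/h(x(t)) ≤ M + β⁰, i.e., h(x(t)) ≥ 1/(M+β⁰) > 0 for all t ≥ 0: boundedness of the barrier state keeps the trajectory uniformly inside the safe set (the safety mechanism underlying Corollary 1). -/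
/-!
Let `φ(t) = 1/h(x(t)) - β⁰`. Along the trajectory `φ' = -(φ + β⁰)² ⟨∇h(x), v⟩`, so `φ` solves the
barrier-state ODE, whose `γ`-term vanishes on it. The difference `w = z - φ` then satisfies the
linear equation `w' = c(t) w` with `c = -⟨∇h(x), v⟩ (z + φ + 2β⁰) - γ` continuous, and `w(0) = 0`;
by Grönwall `w ≡ 0`. Hence `1/h(x(t)) = z(t) + β⁰ ≤ M + β⁰`.
-/

open Set

theorem eq_zero_of_hasDerivWithinAt_smul_self_of_eq_zero {E : Type*} [NormedAddCommGroup E]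
    [NormedSpace ℝ E] {f : ℝ → E} {c : ℝ → ℝ} {a b : ℝ}
    (hc : ContinuousOn c (Icc a b)) (hf : ContinuousOn f (Icc a b))
    (hf' : ∀ t ∈ Ico a b, HasDerivWithinAt f (c t • f t) (Ici t) t) (ha : f a = 0) :
    ∀ t ∈ Icc a b, f t = 0 := by
  obtain ⟨K, hK⟩ := isCompact_Icc.exists_bound_of_continuousOn hc
  refine eq_zero_of_abs_deriv_le_mul_abs_self_of_eq_zero_right (K := K) hf hf' ha fun t ht => ?_
  rw [norm_smul]
  exact mul_le_mul_of_nonneg_right (hK t (Ico_subset_Icc_self ht)) (norm_nonneg _)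

section Barrier

variable {F : Type*} [NormedAddCommGroup F] [InnerProductSpace ℝ F] [CompleteSpace F]

theorem hasDerivAt_one_div_comp {h : F → ℝ} {x : ℝ → F} {w : F} {t : ℝ}
    (hh : DifferentiableAt ℝ h (x t)) (hx : HasDerivAt x w t) (hne : h (x t) ≠ 0) :
    HasDerivAt (fun s => 1 / h (x s)) (-(1 / h (x t)) ^ 2 * inner ℝ (gradient h (x t)) w) t := by
  have hcomp : HasDerivAt (fun s => h (x s)) (fderiv ℝ h (x t) w) t :=
    hh.hasFDerivAt.comp_hasDerivAt t hx
  rw [inner_gradient_left]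
  simp only [one_div]
  exact (hcomp.inv hne).congr_deriv (by field_simp)

theorem barrier_state_eq_one_div_sub {h : F → ℝ} (hh : ContDiff ℝ 1 h) {γ β₀ : ℝ}
    {x v : ℝ → F} (hx : ∀ t : ℝ, HasDerivAt x (v t) t) (hv : Continuous v)
    (hsafe : ∀ t : ℝ, 0 ≤ t → 0 < h (x t)) {z : ℝ → ℝ}
    (hz : ∀ t : ℝ, 0 ≤ t →
      HasDerivAt z
        (-(z t + β₀) ^ 2 * inner ℝ (gradient h (x t)) (v t) - γ * (z t + β₀ - 1 / h (x t))) t)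
    (hz0 : z 0 = 1 / h (x 0) - β₀) {t : ℝ} (ht : 0 ≤ t) :
    z t = 1 / h (x t) - β₀ := by
  set a : ℝ → ℝ := fun s => inner ℝ (gradient h (x s)) (v s)
  set b : ℝ → ℝ := fun s => 1 / h (x s)
  have hb : ∀ s, 0 ≤ s → HasDerivAt b (-(b s) ^ 2 * a s) s := fun s hs =>
    hasDerivAt_one_div_comp (hh.differentiable one_ne_zero _) (hx s) (hsafe s hs).ne'
  have ha : Continuous a := by
    have hxc : Continuous x := continuous_iff_continuousAt.2 fun s => (hx s).continuousAt
    simp only [a, inner_gradient_left]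
    exact ((hh.continuous_fderiv one_ne_zero).comp hxc).clm_apply hv
  have hzc : ContinuousOn z (Ici 0) := fun s hs => (hz s hs).continuousAt.continuousWithinAt
  have hbc : ContinuousOn b (Ici 0) := fun s hs => (hb s hs).continuousAt.continuousWithinAt
  -- `(z + β₀)² - b² = (z + β₀ - b)(z + β₀ + b)` makes the equation for `z - (b - β₀)` linear.
  have hw : ∀ s ∈ Ico 0 t, HasDerivWithinAt (fun s => z s - (b s - β₀))
      ((-(a s * (z s + β₀ + b s)) - γ) • (z s - (b s - β₀))) (Ici s) s := fun s hs =>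
    (((hz s hs.1).sub ((hb s hs.1).sub_const β₀)).congr_deriv (by simp only [smul_eq_mul]; ring))
      |>.hasDerivWithinAt
  have hzero := eq_zero_of_hasDerivWithinAt_smul_self_of_eq_zero (a := 0) (b := t)
    ((ha.continuousOn.mul ((hzc.add continuousOn_const).add hbc)).neg.sub continuousOn_const
      |>.mono Icc_subset_Ici_self)
    ((hzc.sub (hbc.sub continuousOn_const)).mono Icc_subset_Ici_self) hw
    (sub_eq_zero.2 hz0) t ⟨ht, le_rfl⟩
  exact sub_eq_zero.1 hzero

end Barrier

theorem barrier_state_bound_keeps_safety_general {n : ℕ}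
    (h : EuclideanSpace ℝ (Fin n) → ℝ) (hh : ContDiff ℝ 1 h)
    (γ : ℝ) (β₀ M : ℝ) (hMβ : 0 < M + β₀)
    (x : ℝ → EuclideanSpace ℝ (Fin n)) (v : ℝ → EuclideanSpace ℝ (Fin n))
    (hx : ∀ t : ℝ, HasDerivAt x (v t) t) (hv : Continuous v)
    (hsafe : ∀ t : ℝ, 0 ≤ t → 0 < h (x t))
    (z : ℝ → ℝ)
    (hz : ∀ t : ℝ, 0 ≤ t →
      HasDerivAt z
        (-(z t + β₀) ^ 2 * (inner ℝ (gradient h (x t)) (v t) : ℝ)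
          - γ * (z t + β₀ - 1 / h (x t))) t)
    (hz0 : z 0 = 1 / h (x 0) - β₀)
    (hzM : ∀ t : ℝ, 0 ≤ t → z t ≤ M) :
    (0:ℝ) < 1 / (M + β₀) ∧
    ∀ t : ℝ, 0 ≤ t → 1 / h (x t) ≤ M + β₀ ∧ 1 / (M + β₀) ≤ h (x t) := by
  refine ⟨one_div_pos.2 hMβ, fun t ht => ?_⟩
  have hbound : 1 / h (x t) ≤ M + β₀ := by
    linarith [barrier_state_eq_one_div_sub hh hx hv hsafe hz hz0 ht, hzM t ht]
  exact ⟨hbound, (one_div_le (hsafe t ht) hMβ).1 hbound⟩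

/-- Boundedness of the barrier state keeps the trajectory uniformly inside the
safe set (the safety mechanism underlying Corollary 1): if the barrier state
`z` solves the barrier-state ODE along a trajectory staying in the safe set,
is consistently initialized, and satisfies `z(t) ≤ M` with `M + β⁰ > 0`, then
`1/h(x(t)) ≤ M + β⁰`, i.e. `h(x(t)) ≥ 1/(M+β⁰) > 0` for all `t ≥ 0`. -/
theorem barrier_state_bound_keeps_safety {n : ℕ}
    (h : EuclideanSpace ℝ (Fin n) → ℝ) (hh : ContDiff ℝ 1 h)
    (γ : ℝ) (hγ : 0 ≤ γ) (β₀ M : ℝ) (hMβ : 0 < M + β₀)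
    (x : ℝ → EuclideanSpace ℝ (Fin n)) (v : ℝ → EuclideanSpace ℝ (Fin n))
    (hx : ∀ t : ℝ, HasDerivAt x (v t) t) (hv : Continuous v)
    (hsafe : ∀ t : ℝ, 0 ≤ t → 0 < h (x t))
    (z : ℝ → ℝ)
    (hz : ∀ t : ℝ, 0 ≤ t →
      HasDerivAt z
        (-(z t + β₀) ^ 2 * (inner ℝ (gradient h (x t)) (v t) : ℝ)
          - γ * (z t + β₀ - 1 / h (x t))) t)
    (hz0 : z 0 = 1 / h (x 0) - β₀)
    (hzM : ∀ t : ℝ, 0 ≤ t → z t ≤ M) :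
    (0:ℝ) < 1 / (M + β₀) ∧
    ∀ t : ℝ, 0 ≤ t → 1 / h (x t) ≤ M + β₀ ∧ 1 / (M + β₀) ≤ h (x t) :=
  barrier_state_bound_keeps_safety_general h hh γ β₀ M hMβ x v hx hv hsafe z hz hz0 hzM
end

section
/- Let P, A, G, Q : ℝ → Matrix n n ℝ with P differentiable, P(t) symmetric and G(t) symmetric positive semidefinite for every t, and suppose the point-wise Riccati identity P(t)A(t) + A(t)ᵀP(t) − P(t)G(t)P(t) + Q(t) = 0 holds for all t. Set A_c := A − G P, and let x : ℝ → ℝⁿ be differentiable with x′(t) = A_c(t) x(t). Then W(t) := ⟨x(t), P(t)x(t)⟩ satisfies W′(t) = −⟨x(t), (Q(t) − P′(t)) x(t)⟩ − ⟨x(t), P(t)G(t)P(t)x(t)⟩ ≤ −⟨x(t), (Q(t) − P′(t)) x(t)⟩ for all t; in particular, if Q(t) − P′(t) is positive definite and x(t) ≠ 0, then W′(t) < 0. (Key inequality (22) in the proof of Theorem 2: the matrix condition Q − Ṗ ≻ 0 makes the Riccati solution a strict Lyapunov function for the closed-loop safety embedded system.) -/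
/-!
Differentiating `W = ⟨x, P x⟩` along `ẋ = A_c x` gives `W′ = ⟨x, (A_cᵀ P + Ṗ + P A_c) x⟩`.
For symmetric `P` and `G` the Riccati equation says exactly `A_cᵀ P + P A_c = −Q − P G P`,
so `W′ = −⟨x, (Q − Ṗ) x⟩ − ⟨P x, G P x⟩`, and the last term is `≤ 0` because `G ⪰ 0`.
-/

open Matrix

section Derivatives

variable {ι : Type*} [Fintype ι] {t : ℝ}

theorem HasDerivAt.dotProduct {y z : ℝ → ι → ℝ} {y' z' : ι → ℝ}
    (hy : HasDerivAt y y' t) (hz : HasDerivAt z z' t) :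
    HasDerivAt (fun s => y s ⬝ᵥ z s) (y' ⬝ᵥ z t + y t ⬝ᵥ z') t := by
  have hsum := HasDerivAt.fun_sum (u := Finset.univ) fun i _ =>
    (hasDerivAt_pi.mp hy i).mul (hasDerivAt_pi.mp hz i)
  rw [Finset.sum_add_distrib] at hsum
  exact hsum

theorem HasDerivAt.mulVec {M : ℝ → Matrix ι ι ℝ} {M' : Matrix ι ι ℝ} {x : ℝ → ι → ℝ}
    {x' : ι → ℝ} (hM : ∀ i j, HasDerivAt (fun s => M s i j) (M' i j) t)
    (hx : HasDerivAt x x' t) :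
    HasDerivAt (fun s => M s *ᵥ x s) (M' *ᵥ x t + M t *ᵥ x') t :=
  hasDerivAt_pi.mpr fun i => (hasDerivAt_pi.mpr (hM i)).dotProduct hx

end Derivatives

namespace Matrix

variable {ι R : Type*} [Fintype ι]

theorem dotProduct_mulVec_add_dotProduct_mulVec_mulVec [CommSemiring R]
    (B P : Matrix ι ι R) (v : ι → R) :
    (B *ᵥ v) ⬝ᵥ (P *ᵥ v) + v ⬝ᵥ (P *ᵥ (B *ᵥ v)) = v ⬝ᵥ ((Bᵀ * P + P * B) *ᵥ v) := by
  rw [add_mulVec, dotProduct_add, ← mulVec_mulVec, ← mulVec_mulVec, dotProduct_mulVec v Bᵀ,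
    vecMul_transpose]

theorem closedLoop_lyapunov_of_riccati [CommRing R] {P A G Q : Matrix ι ι R}
    (hP : P.IsSymm) (hG : G.IsSymm) (hRic : P * A + Aᵀ * P - P * G * P + Q = 0) :
    (A - G * P)ᵀ * P + P * (A - G * P) = -Q - P * G * P := by
  rw [← sub_eq_zero, ← hRic]
  simp only [transpose_sub, transpose_mul, hP.eq, hG.eq, sub_mul, mul_sub, mul_assoc]
  abel

theorem PosSemidef.dotProduct_mulVec_conj_nonneg {P G : Matrix ι ι ℝ} (hG : G.PosSemidef)
    (hP : P.IsSymm) (v : ι → ℝ) : 0 ≤ v ⬝ᵥ ((P * G * P) *ᵥ v) := by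
  have hPGP := hG.mul_mul_conjTranspose_same P
  rw [conjTranspose_eq_transpose_of_trivial, hP.eq] at hPGP
  simpa using hPGP.dotProduct_mulVec_nonneg v

end Matrix

theorem riccati_lyapunov_key_inequality_general {n : ℕ}
    (P P' A G Q : ℝ → Matrix (Fin n) (Fin n) ℝ)
    (hP : ∀ (t : ℝ) (i j : Fin n), HasDerivAt (fun s => P s i j) (P' t i j) t)
    (hPsymm : ∀ t : ℝ, (P t).IsSymm)
    (hGpsd : ∀ t : ℝ, (G t).PosSemidef)
    (hRic : ∀ t : ℝ, P t * A t + (A t)ᵀ * P t - P t * G t * P t + Q t = 0)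
    (x : ℝ → (Fin n → ℝ))
    (hx : ∀ t : ℝ, HasDerivAt x ((A t - G t * P t).mulVec (x t)) t) :
    ∀ t : ℝ,
      HasDerivAt (fun s => x s ⬝ᵥ (P s).mulVec (x s))
        (-(x t ⬝ᵥ (Q t - P' t).mulVec (x t))
          - x t ⬝ᵥ (P t * G t * P t).mulVec (x t)) t ∧
      (-(x t ⬝ᵥ (Q t - P' t).mulVec (x t))
          - x t ⬝ᵥ (P t * G t * P t).mulVec (x t)
        ≤ -(x t ⬝ᵥ (Q t - P' t).mulVec (x t))) ∧
      ((Q t - P' t).PosDef → x t ≠ 0 →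
        -(x t ⬝ᵥ (Q t - P' t).mulVec (x t))
          - x t ⬝ᵥ (P t * G t * P t).mulVec (x t) < 0) := by
  intro t
  have hGsymm : (G t).IsSymm := isHermitian_iff_isSymm.mp (hGpsd t).isHermitian
  have hPGP := (hGpsd t).dotProduct_mulVec_conj_nonneg (hPsymm t) (x t)
  refine ⟨?_, by linarith, fun hQ hxne => ?_⟩
  · have hW := (hx t).dotProduct (HasDerivAt.mulVec (hP t) (hx t))
    convert hW using 1
    rw [dotProduct_add, add_left_comm, dotProduct_mulVec_add_dotProduct_mulVec_mulVec,
      closedLoop_lyapunov_of_riccati (hPsymm t) hGsymm (hRic t)]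
    simp only [sub_mulVec, neg_mulVec, dotProduct_sub, dotProduct_neg]
    ring
  · have hQx := hQ.dotProduct_mulVec_pos hxne
    rw [star_trivial] at hQx
    linarith

/-- Key inequality (22) in the proof of Theorem 2: along closed-loop
trajectories `ẋ = (A − G P) x` of the safety embedded system, if `P(t)` solves
the point-wise Riccati equation `P A + Aᵀ P − P G P + Q = 0`, then
`W(t) = ⟨x, P x⟩` satisfies
`W′ = −⟨x, (Q − Ṗ)x⟩ − ⟨x, P G P x⟩ ≤ −⟨x, (Q − Ṗ)x⟩`; in particular, if
`Q − Ṗ ≻ 0` and `x(t) ≠ 0` then `W′(t) < 0`. -/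
theorem riccati_lyapunov_key_inequality {n : ℕ}
    (P P' A G Q : ℝ → Matrix (Fin n) (Fin n) ℝ)
    (hP : ∀ (t : ℝ) (i j : Fin n), HasDerivAt (fun s => P s i j) (P' t i j) t)
    (hPsymm : ∀ t : ℝ, (P t).IsSymm)
    (hGsymm : ∀ t : ℝ, (G t).IsSymm)
    (hGpsd : ∀ t : ℝ, (G t).PosSemidef)
    (hRic : ∀ t : ℝ, P t * A t + (A t)ᵀ * P t - P t * G t * P t + Q t = 0)
    (x : ℝ → (Fin n → ℝ))
    (hx : ∀ t : ℝ, HasDerivAt x ((A t - G t * P t).mulVec (x t)) t) :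
    ∀ t : ℝ,
      HasDerivAt (fun s => x s ⬝ᵥ (P s).mulVec (x s))
        (-(x t ⬝ᵥ (Q t - P' t).mulVec (x t))
          - x t ⬝ᵥ (P t * G t * P t).mulVec (x t)) t ∧
      (-(x t ⬝ᵥ (Q t - P' t).mulVec (x t))
          - x t ⬝ᵥ (P t * G t * P t).mulVec (x t)
        ≤ -(x t ⬝ᵥ (Q t - P' t).mulVec (x t))) ∧
      ((Q t - P' t).PosDef → x t ≠ 0 →
        -(x t ⬝ᵥ (Q t - P' t).mulVec (x t))
          - x t ⬝ᵥ (P t * G t * P t).mulVec (x t) < 0) :=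
  riccati_lyapunov_key_inequality_general P P' A G Q hP hPsymm hGpsd hRic x hx
end

section
/- Let P, A, G, Q : ℝ → Matrix n n ℝ be differentiable with P(t) and G(t) symmetric for all t, and suppose the point-wise Riccati identity P(t)A(t) + A(t)ᵀP(t) − P(t)G(t)P(t) + Q(t) = 0 holds for all t. Then, with A_c := A − G P, the derivative P′ satisfies the Lyapunov equation P′(t) A_c(t) + A_c(t)ᵀ P′(t) + Q̃(t) = 0 for all t, where Q̃ := P A′ + (A′)ᵀ P − P G′ P + Q′. -/
/-!
The Riccati expression vanishes identically, so its entrywise derivative, computed by the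
product rule, is zero. Since `P` and `G` are symmetric, `(A - G P)ᵀ = Aᵀ - P G`, and that
derivative regroups exactly into `Ṗ A_c + A_cᵀ Ṗ + Q̃`.
-/

open Matrix

namespace Matrix

variable {𝕜 : Type*} [NontriviallyNormedField 𝕜] {l m n : Type*}

def HasEntrywiseDerivAt (M : 𝕜 → Matrix m n 𝕜) (M' : Matrix m n 𝕜) (t : 𝕜) : Prop :=
  ∀ i j, HasDerivAt (fun s => M s i j) (M' i j) t

theorem hasEntrywiseDerivAt_const (M : Matrix m n 𝕜) (t : 𝕜) :
    HasEntrywiseDerivAt (fun _ => M) 0 t :=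
  fun i j => hasDerivAt_const t (M i j)

namespace HasEntrywiseDerivAt

variable {M N : 𝕜 → Matrix m n 𝕜} {M' N' : Matrix m n 𝕜} {t : 𝕜}

theorem unique (h₁ : HasEntrywiseDerivAt M M' t) (h₂ : HasEntrywiseDerivAt M N' t) :
    M' = N' :=
  ext fun i j => (h₁ i j).unique (h₂ i j)

theorem add (hM : HasEntrywiseDerivAt M M' t) (hN : HasEntrywiseDerivAt N N' t) :
    HasEntrywiseDerivAt (fun s => M s + N s) (M' + N') t :=
  fun i j => (hM i j).add (hN i j)

theorem sub (hM : HasEntrywiseDerivAt M M' t) (hN : HasEntrywiseDerivAt N N' t) :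
    HasEntrywiseDerivAt (fun s => M s - N s) (M' - N') t :=
  fun i j => (hM i j).sub (hN i j)

theorem transpose (hM : HasEntrywiseDerivAt M M' t) :
    HasEntrywiseDerivAt (fun s => (M s)ᵀ) M'ᵀ t :=
  fun i j => hM j i

theorem mul [Fintype m] {M : 𝕜 → Matrix l m 𝕜} {M' : Matrix l m 𝕜}
    (hM : HasEntrywiseDerivAt M M' t) (hN : HasEntrywiseDerivAt N N' t) :
    HasEntrywiseDerivAt (fun s => M s * N s) (M' * N t + M t * N') t := by
  intro i j
  simp only [mul_apply, add_apply, ← Finset.sum_add_distrib]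
  exact HasDerivAt.fun_sum fun k _ => (hM i k).mul (hN k j)

end HasEntrywiseDerivAt

end Matrix

/-- Differentiating the state-dependent Riccati equation along closed-loop
trajectories (equation (18)): the derivative `Ṗ` satisfies the Lyapunov
equation `Ṗ A_c + A_cᵀ Ṗ + Q̃ = 0` with `A_c = A − G P` and
`Q̃ = P Ȧ + Ȧᵀ P − P Ġ P + Q̇`. -/
theorem riccati_derivative_lyapunov_equation {n : ℕ}
    (P P' A A' G G' Q Q' : ℝ → Matrix (Fin n) (Fin n) ℝ)
    (hP : ∀ (t : ℝ) (i j : Fin n), HasDerivAt (fun s => P s i j) (P' t i j) t)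
    (hA : ∀ (t : ℝ) (i j : Fin n), HasDerivAt (fun s => A s i j) (A' t i j) t)
    (hG : ∀ (t : ℝ) (i j : Fin n), HasDerivAt (fun s => G s i j) (G' t i j) t)
    (hQ : ∀ (t : ℝ) (i j : Fin n), HasDerivAt (fun s => Q s i j) (Q' t i j) t)
    (hPsymm : ∀ t : ℝ, (P t).IsSymm)
    (hGsymm : ∀ t : ℝ, (G t).IsSymm)
    (hRic : ∀ t : ℝ, P t * A t + (A t)ᵀ * P t - P t * G t * P t + Q t = 0) :
    ∀ t : ℝ,
      P' t * (A t - G t * P t) + (A t - G t * P t)ᵀ * P' t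
        + (P t * A' t + (A' t)ᵀ * P t - P t * G' t * P t + Q' t) = 0 := by
  intro t
  have hP : HasEntrywiseDerivAt P (P' t) t := hP t
  have hA : HasEntrywiseDerivAt A (A' t) t := hA t
  have hG : HasEntrywiseDerivAt G (G' t) t := hG t
  have hQ : HasEntrywiseDerivAt Q (Q' t) t := hQ t
  have hRicDeriv := (((hP.mul hA).add (hA.transpose.mul hP)).sub ((hP.mul hG).mul hP)).add hQ
  have hRicConst : HasEntrywiseDerivAt
      (fun s => P s * A s + (A s)ᵀ * P s - P s * G s * P s + Q s) 0 t := by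
    simpa only [hRic] using hasEntrywiseDerivAt_const (0 : Matrix (Fin n) (Fin n) ℝ) t
  rw [transpose_sub, transpose_mul, (hPsymm t).eq, (hGsymm t).eq, ← hRicDeriv.unique hRicConst]
  noncomm_ring
end
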